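/- arXiv:2202.06311 — 6 statements merged into one kernel-verified Lean document; each statement's English description precedes it below -/
import Mathlib

section
/- In a (v,4)-packing whose maximum partial parallel class has size ρ, if B = {w,x,y,z} is a block of a fixed maximum PPC 𝒫 and t_w³ ≥ max{t_x³, t_y³, t_z³}, where t_p³ denotes the number of blocks not in 𝒫 containing point p and exactly three points outside the PPC, then either t_w³ ≤ 3, or t_w³ ≥ 4 and t_x³ = t_y³ = t_z³ = 0. -/
/-- A `(v,k)`-packing: a family of `k`-subsets of a `v`-set such that
every pair of points occurs in at most one block. -/
def IsPacking (v k : ℕ) (B : Finset (Finset (Fin v))) : Prop :=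
  (∀ b ∈ B, b.card = k) ∧
    ∀ b₁ ∈ B, ∀ b₂ ∈ B, b₁ ≠ b₂ → (b₁ ∩ b₂).card ≤ 1

/-- A partial parallel class: a set of pairwise disjoint blocks of the packing. -/
def IsPPC {v : ℕ} (B P : Finset (Finset (Fin v))) : Prop :=
  P ⊆ B ∧ ∀ b₁ ∈ P, ∀ b₂ ∈ P, b₁ ≠ b₂ → Disjoint b₁ b₂

/-- The maximum PPC of `B` has size `ρ`. -/
def MaxPPCSize {v : ℕ} (B : Finset (Finset (Fin v))) (ρ : ℕ) : Prop :=
  (∃ P, IsPPC B P ∧ P.card = ρ) ∧ ∀ P, IsPPC B P → P.card ≤ ρ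

/-- `β(ρ,v,k)`: the maximum number of blocks in a `(v,k)`-packing whose
maximum partial parallel class has size `ρ`. -/
noncomputable def beta (ρ v k : ℕ) : ℕ :=
  sSup {b | ∃ B : Finset (Finset (Fin v)),
    IsPacking v k B ∧ MaxPPCSize B ρ ∧ B.card = b}

/-- The packing number `D(v,k)`. -/
noncomputable def packingNumber (v k : ℕ) : ℕ :=
  sSup {b | ∃ B : Finset (Finset (Fin v)), IsPacking v k B ∧ B.card = b}

/-!
Let `U` be the union of the PPC. A block through `w ∈ U` with three points outside `U` meets `U`
only in `w`, and two such blocks through `w` share only `w`, so their outer triples are pairwise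
disjoint. If there are at least four of them, one of them misses the outer triple of any block
`b'` through another point `x` of the same PPC block `Bi`; then it is disjoint from `b'`, and
replacing `Bi` by these two blocks enlarges the PPC. Hence `t_x³ = 0`.
-/

open Finset

theorem Finset.exists_disjoint_of_pairwiseDisjoint_of_card_lt {ι α : Type*} [DecidableEq α]
    {s : Finset ι} {f : ι → Finset α} (hs : (s : Set ι).PairwiseDisjoint f) {c : Finset α}
    (hc : #c < #s) : ∃ i ∈ s, Disjoint (f i) c := by
  by_contra! h
  have hle : #s ≤ #(s.biUnion fun i => f i ∩ c) :=
    card_le_card_biUnion (hs.mono fun _ => inter_subset_left)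
      fun i hi => not_disjoint_iff_nonempty_inter.mp (h i hi)
  have hsub : #(s.biUnion fun i => f i ∩ c) ≤ #c :=
    card_le_card (biUnion_subset.2 fun _ _ => inter_subset_right)
  omega

theorem Finset.inter_eq_singleton_of_card_eq_card_sdiff_add_one {α : Type*} [DecidableEq α]
    {b U : Finset α} {p : α} (h : #b = #(b \ U) + 1) (hp : p ∈ b) (hpU : p ∈ U) :
    b ∩ U = {p} := by
  have hcard : #(b ∩ U) = 1 := by
    have := card_sdiff_add_card_inter b U
    omega
  obtain ⟨a, ha⟩ := card_eq_one.mp hcard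
  have hpa : p ∈ b ∩ U := mem_inter.mpr ⟨hp, hpU⟩
  rw [ha, mem_singleton] at hpa
  rw [ha, hpa]

section Packing

variable {v : ℕ} {B P : Finset (Finset (Fin v))}

/-- The family `𝒯_p³`: blocks outside the PPC `P` through `p` with exactly three points
outside the union of `P`. -/
def tripleBlocks (B P : Finset (Finset (Fin v))) (p : Fin v) : Finset (Finset (Fin v)) :=
  (B \ P).filter fun b => p ∈ b ∧ #(b \ P.sup id) = 3

theorem mem_tripleBlocks {p : Fin v} {b : Finset (Fin v)} :
    b ∈ tripleBlocks B P p ↔ (b ∈ B ∧ b ∉ P) ∧ p ∈ b ∧ #(b \ P.sup id) = 3 := by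
  rw [tripleBlocks, mem_filter, mem_sdiff]

theorem mem_sup_id_of_mem {b : Finset (Fin v)} {p : Fin v} (hb : b ∈ P) (hp : p ∈ b) :
    p ∈ P.sup id :=
  le_sup (f := id) hb hp

theorem inter_sup_id_eq_singleton_of_mem_tripleBlocks (hpack : IsPacking v 4 B)
    {p : Fin v} (hpU : p ∈ P.sup id) {b : Finset (Fin v)} (hb : b ∈ tripleBlocks B P p) :
    b ∩ P.sup id = {p} := by
  obtain ⟨⟨hbB, -⟩, hpb, h3⟩ := mem_tripleBlocks.mp hb
  exact inter_eq_singleton_of_card_eq_card_sdiff_add_one (by rw [hpack.1 b hbB, h3]) hpb hpU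

theorem pairwiseDisjoint_sdiff_tripleBlocks (hpack : IsPacking v 4 B) {p : Fin v}
    (hpU : p ∈ P.sup id) :
    (tripleBlocks B P p : Set (Finset (Fin v))).PairwiseDisjoint (· \ P.sup id) := by
  intro b₁ h₁ b₂ h₂ hne
  obtain ⟨⟨h₁B, -⟩, hp₁, -⟩ := mem_tripleBlocks.mp h₁
  obtain ⟨⟨h₂B, -⟩, hp₂, -⟩ := mem_tripleBlocks.mp h₂
  refine disjoint_left.mpr fun q hq₁ hq₂ => ?_
  rw [mem_sdiff] at hq₁ hq₂
  have hqp : q = p := by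
    by_contra hqp
    have : 1 < #(b₁ ∩ b₂) :=
      one_lt_card.mpr ⟨q, mem_inter.mpr ⟨hq₁.1, hq₂.1⟩, p, mem_inter.mpr ⟨hp₁, hp₂⟩, hqp⟩
    have := hpack.2 b₁ h₁B b₂ h₂B hne
    omega
  exact hq₁.2 (hqp ▸ hpU)

theorem IsPPC.disjoint_of_inter_sup_id_subset (hP : IsPPC B P) {Bi b : Finset (Fin v)}
    (hBi : Bi ∈ P) (hb : b ∩ P.sup id ⊆ Bi) {C : Finset (Fin v)} (hC : C ∈ P.erase Bi) :
    Disjoint b C := by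
  obtain ⟨hCBi, hCP⟩ := mem_erase.mp hC
  refine disjoint_left.mpr fun q hqb hqC => ?_
  have hqBi : q ∈ Bi := hb (mem_inter.mpr ⟨hqb, mem_sup_id_of_mem hCP hqC⟩)
  exact disjoint_left.mp (hP.2 Bi hBi C hCP hCBi.symm) hqBi hqC

theorem IsPPC.insert_insert_erase (hP : IsPPC B P) {Bi b b' : Finset (Fin v)} (hBi : Bi ∈ P)
    (hb : b ∈ B) (hb' : b' ∈ B) (hbb' : Disjoint b b') (hbU : b ∩ P.sup id ⊆ Bi)
    (hb'U : b' ∩ P.sup id ⊆ Bi) : IsPPC B (insert b (insert b' (P.erase Bi))) := by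
  refine ⟨?_, ?_⟩
  · simp only [insert_subset_iff]
    exact ⟨hb, hb', (erase_subset Bi P).trans hP.1⟩
  · intro C₁ hC₁ C₂ hC₂ hne
    simp only [mem_insert] at hC₁ hC₂
    rcases hC₁ with rfl | rfl | hC₁ <;> rcases hC₂ with rfl | rfl | hC₂
    · exact absurd rfl hne
    · exact hbb'
    · exact hP.disjoint_of_inter_sup_id_subset hBi hbU hC₂
    · exact hbb'.symm
    · exact absurd rfl hne
    · exact hP.disjoint_of_inter_sup_id_subset hBi hb'U hC₂
    · exact (hP.disjoint_of_inter_sup_id_subset hBi hbU hC₁).symm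
    · exact (hP.disjoint_of_inter_sup_id_subset hBi hb'U hC₁).symm
    · exact hP.2 _ (mem_of_mem_erase hC₁) _ (mem_of_mem_erase hC₂) hne

theorem card_insert_insert_erase {Bi b b' : Finset (Fin v)} (hBi : Bi ∈ P) (hb : b ∉ P)
    (hb' : b' ∉ P) (hbb' : b ≠ b') : #(insert b (insert b' (P.erase Bi))) = #P + 1 := by
  have hb'' : b ∉ insert b' (P.erase Bi) := by
    rw [mem_insert]
    rintro (h | h)
    exacts [hbb' h, hb (mem_of_mem_erase h)]
  rw [card_insert_of_notMem hb'', card_insert_of_notMem fun h => hb' (mem_of_mem_erase h),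
    card_erase_of_mem hBi]
  have := card_pos.mpr ⟨Bi, hBi⟩
  omega

/-- Otherwise exchanging `Bi` for `b` and `b'` would give a larger PPC. -/
theorem IsPPC.not_disjoint_of_maximal (hP : IsPPC B P) (hmax : ∀ Q, IsPPC B Q → #Q ≤ #P)
    {Bi b b' : Finset (Fin v)} (hBi : Bi ∈ P) (hb : b ∈ B \ P) (hb' : b' ∈ B \ P)
    (hbU : b ∩ P.sup id ⊆ Bi) (hb'U : b' ∩ P.sup id ⊆ Bi) (hne : b.Nonempty) :
    ¬ Disjoint b b' := by
  intro hbb'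
  rw [mem_sdiff] at hb hb'
  have hQ := hmax _ (hP.insert_insert_erase hBi hb.1 hb'.1 hbb' hbU hb'U)
  have hbb'ne : b ≠ b' := by
    rintro rfl
    exact hne.ne_empty (disjoint_self.mp hbb')
  rw [card_insert_insert_erase hBi hb.2 hb'.2 hbb'ne] at hQ
  omega

theorem tripleBlocks_eq_empty_of_four_le_card (hpack : IsPacking v 4 B) (hP : IsPPC B P)
    (hmax : ∀ Q, IsPPC B Q → #Q ≤ #P) {Bi : Finset (Fin v)} (hBi : Bi ∈ P) {w x : Fin v}
    (hw : w ∈ Bi) (hx : x ∈ Bi) (hwx : w ≠ x) (h4 : 4 ≤ #(tripleBlocks B P w)) :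
    tripleBlocks B P x = ∅ := by
  set U := P.sup id
  refine eq_empty_iff_forall_notMem.mpr fun b' hb' => ?_
  have hb'U : b' ∩ U = {x} :=
    inter_sup_id_eq_singleton_of_mem_tripleBlocks hpack (mem_sup_id_of_mem hBi hx) hb'
  have h3 : #(b' \ U) < #(tripleBlocks B P w) := by
    rw [(mem_tripleBlocks.mp hb').2.2]
    omega
  obtain ⟨b, hb, hbb'⟩ := exists_disjoint_of_pairwiseDisjoint_of_card_lt
    (pairwiseDisjoint_sdiff_tripleBlocks hpack (mem_sup_id_of_mem hBi hw)) h3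
  have hbU : b ∩ U = {w} :=
    inter_sup_id_eq_singleton_of_mem_tripleBlocks hpack (mem_sup_id_of_mem hBi hw) hb
  have hdisj : Disjoint b b' := by
    refine disjoint_left.mpr fun q hqb hqb' => ?_
    by_cases hqU : q ∈ U
    · have hqw : q ∈ b ∩ U := mem_inter.mpr ⟨hqb, hqU⟩
      have hqx : q ∈ b' ∩ U := mem_inter.mpr ⟨hqb', hqU⟩
      rw [hbU, mem_singleton] at hqw
      rw [hb'U, mem_singleton] at hqx
      exact hwx (hqw.symm.trans hqx)
    · exact disjoint_left.mp hbb' (mem_sdiff.mpr ⟨hqb, hqU⟩) (mem_sdiff.mpr ⟨hqb', hqU⟩)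
  have hsub : ∀ {c : Finset (Fin v)} {p : Fin v}, c ∩ U = {p} → p ∈ Bi → c ∩ U ⊆ Bi :=
    fun hc hp => hc ▸ singleton_subset_iff.mpr hp
  exact hP.not_disjoint_of_maximal hmax hBi (mem_filter.mp hb).1 (mem_filter.mp hb').1
    (hsub hbU hw) (hsub hb'U hx) ⟨w, (mem_tripleBlocks.mp hb).2.1⟩ hdisj

end Packing

theorem stmt0_general (v ρ : ℕ) (B : Finset (Finset (Fin v)))
    (hpack : IsPacking v 4 B)
    (P : Finset (Finset (Fin v)))
    (hPPC : IsPPC B P) (hcard : P.card = ρ)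
    (hmax : ∀ Q, IsPPC B Q → Q.card ≤ ρ)
    (t : Fin v → ℕ)
    (ht : ∀ p, t p =
      ((B \ P).filter (fun b => p ∈ b ∧ (b \ P.sup id).card = 3)).card)
    (w x y z : Fin v)
    (hB : ({w, x, y, z} : Finset (Fin v)) ∈ P) :
    t w ≤ 3 ∨ (4 ≤ t w ∧ t x = 0 ∧ t y = 0 ∧ t z = 0) := by
  rcases le_or_gt (t w) 3 with h3 | h4
  · exact Or.inl h3
  have hw : w ∉ ({x, y, z} : Finset (Fin v)) := by
    intro hw
    have hc4 := hpack.1 _ (hPPC.1 hB)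
    rw [insert_eq_of_mem hw] at hc4
    have := card_le_three (a := x) (b := y) (c := z)
    omega
  simp only [mem_insert, mem_singleton, not_or] at hw
  obtain ⟨hwx, hwy, hwz⟩ := hw
  have hvanish : ∀ p ∈ ({w, x, y, z} : Finset (Fin v)), w ≠ p → t p = 0 := fun p hp hwp => by
    rw [ht, ← tripleBlocks, tripleBlocks_eq_empty_of_four_le_card hpack hPPC (hcard ▸ hmax) hB
      (by simp) hp hwp (by rw [tripleBlocks, ← ht]; omega), card_empty]
  exact Or.inr ⟨h4, hvanish x (by simp) hwx, hvanish y (by simp) hwy, hvanish z (by simp) hwz⟩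

theorem stmt0 (v ρ : ℕ) (B : Finset (Finset (Fin v)))
    (hpack : IsPacking v 4 B)
    (P : Finset (Finset (Fin v)))
    (hPPC : IsPPC B P) (hcard : P.card = ρ)
    (hmax : ∀ Q, IsPPC B Q → Q.card ≤ ρ)
    (t : Fin v → ℕ)
    (ht : ∀ p, t p =
      ((B \ P).filter (fun b => p ∈ b ∧ (b \ P.sup id).card = 3)).card)
    (w x y z : Fin v)
    (hB : ({w, x, y, z} : Finset (Fin v)) ∈ P)
    (hw : t x ≤ t w ∧ t y ≤ t w ∧ t z ≤ t w) :
    t w ≤ 3 ∨ (4 ≤ t w ∧ t x = 0 ∧ t y = 0 ∧ t z = 0) :=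
  stmt0_general v ρ B hpack P hPPC hcard hmax t ht w x y z hB
end

section
/- For all positive integers ρ, v, k=4 with 4ρ ≤ v, every (v,4)-packing whose maximum partial parallel class has size ρ contains at most ρ·((8ρ−7) + max{12, ⌊(v−4ρ)/3⌋}) blocks; i.e., β(ρ,v,4) ≤ ρ((8ρ−7) + max{12, ⌊(v−4ρ)/3⌋}). -/
/-!
Fix a maximum partial parallel class `P` and let `S` be the set of its `4ρ` points. By maximality
every block meets `S`. Distinct blocks share no pair of points, so the blocks meeting `S` at least
twice use disjoint sets of pairs of `S`; the blocks of `P` use `6` pairs each, whence at most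
`ρ + C(4ρ, 2) - 6ρ = ρ(8ρ - 7)` such blocks.

The blocks meeting `S` in a single point are sorted by the block `p ∈ P` containing that point.
Any two of those attached to `p` intersect: otherwise replacing `p` by both would enlarge `P`.
If they all pass through one point of `S`, their remaining three points are pairwise disjoint
and outside `S`, so there are at most `(v - 4ρ)/3` of them. Otherwise, for each `x ∈ p` pick
such a block `t` missing `x`: every block through `x` meets `t` off `S`, in distinct points, so at
most `3` blocks pass through `x`, and at most `12` are attached to `p`.
-/

open Finset

def IsMaximumPPC {v : ℕ} (B P : Finset (Finset (Fin v))) : Prop :=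
  IsPPC B P ∧ ∀ Q, IsPPC B Q → #Q ≤ #P

section

variable {v k : ℕ} {B P : Finset (Finset (Fin v))}

theorem isPPC_iff : IsPPC B P ↔ P ⊆ B ∧ (P : Set (Finset (Fin v))).PairwiseDisjoint id :=
  Iff.rfl

namespace IsPacking

theorem eq_of_mem_of_mem (hB : IsPacking v k B) {b₁ b₂ : Finset (Fin v)} (hb₁ : b₁ ∈ B)
    (hb₂ : b₂ ∈ B) {a c : Fin v} (hac : a ≠ c) (ha₁ : a ∈ b₁) (hc₁ : c ∈ b₁) (ha₂ : a ∈ b₂)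
    (hc₂ : c ∈ b₂) : b₁ = b₂ := by
  by_contra hne
  have hpair : #({a, c} : Finset (Fin v)) ≤ #(b₁ ∩ b₂) :=
    card_le_card (insert_subset (mem_inter.2 ⟨ha₁, ha₂⟩)
      (singleton_subset_iff.2 (mem_inter.2 ⟨hc₁, hc₂⟩)))
  rw [card_pair hac] at hpair
  have := hB.2 b₁ hb₁ b₂ hb₂ hne
  omega

theorem disjoint_erase (hB : IsPacking v k B) {b₁ b₂ : Finset (Fin v)} (hb₁ : b₁ ∈ B)
    (hb₂ : b₂ ∈ B) (hne : b₁ ≠ b₂) {x : Fin v} (hx₁ : x ∈ b₁) (hx₂ : x ∈ b₂) :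
    Disjoint (b₁.erase x) (b₂.erase x) :=
  disjoint_left.2 fun _ ha₁ ha₂ => hne <| hB.eq_of_mem_of_mem hb₁ hb₂ (ne_of_mem_erase ha₁)
    (mem_of_mem_erase ha₁) hx₁ (mem_of_mem_erase ha₂) hx₂

theorem disjoint_powersetCard_two (hB : IsPacking v k B) {b₁ b₂ : Finset (Fin v)} (hb₁ : b₁ ∈ B)
    (hb₂ : b₂ ∈ B) (hne : b₁ ≠ b₂) : Disjoint (b₁.powersetCard 2) (b₂.powersetCard 2) := by
  refine disjoint_left.2 fun t ht₁ ht₂ => hne ?_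
  rw [mem_powersetCard] at ht₁ ht₂
  obtain ⟨a, c, hac, rfl⟩ := card_eq_two.1 ht₁.2
  exact hB.eq_of_mem_of_mem hb₁ hb₂ hac (ht₁.1 (mem_insert_self a {c}))
    (ht₁.1 (mem_insert_of_mem (mem_singleton_self c))) (ht₂.1 (mem_insert_self a {c}))
    (ht₂.1 (mem_insert_of_mem (mem_singleton_self c)))

theorem card_biUnion_id (hB : IsPacking v k B) (hP : IsPPC B P) : #(P.biUnion id) = k * #P := by
  rw [card_biUnion (isPPC_iff.1 hP).2]
  exact (sum_const_nat fun b hb => hB.1 b (hP.1 hb)).trans (mul_comm _ _)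

/-- Blocks meeting `S` in the same single point `x` are disjoint off `S`. -/
theorem mul_card_le_card_compl (hB : IsPacking v k B) {F : Finset (Finset (Fin v))}
    {S : Finset (Fin v)} {x : Fin v} (hFB : F ⊆ B) (hFS : ∀ b ∈ F, b ∩ S = {x}) :
    (k - 1) * #F ≤ #Sᶜ := by
  have hx : ∀ b ∈ F, x ∈ b ∩ S := fun b hb => by rw [hFS b hb]; exact mem_singleton_self x
  have hcard : ∀ b ∈ F, #(b \ S) = k - 1 := fun b hb => by
    rw [card_sdiff, inter_comm, hFS b hb, card_singleton, hB.1 b (hFB hb)]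
  have hsub : ∀ b ∈ F, b \ S ⊆ b.erase x := fun b hb => by
    rw [erase_eq]
    exact sdiff_subset_sdiff subset_rfl (singleton_subset_iff.2 (mem_inter.1 (hx b hb)).2)
  have hdisj : (F : Set (Finset (Fin v))).PairwiseDisjoint (· \ S) := fun b₁ h₁ b₂ h₂ hne =>
    (hB.disjoint_erase (hFB h₁) (hFB h₂) hne (mem_inter.1 (hx b₁ h₁)).1
      (mem_inter.1 (hx b₂ h₂)).1).mono (hsub b₁ h₁) (hsub b₂ h₂)
  calc (k - 1) * #F = #(F.biUnion (· \ S)) := by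
        rw [card_biUnion hdisj, sum_const_nat hcard, mul_comm]
    _ ≤ #Sᶜ := card_le_card <| biUnion_subset.2 fun b _ a ha => mem_compl.2 (mem_sdiff.1 ha).2

/-- Blocks through `x` that all meet a block `t` avoiding `x` do so in distinct points. -/
theorem card_le_of_not_disjoint (hB : IsPacking v k B) {G : Finset (Finset (Fin v))}
    {t : Finset (Fin v)} {x y : Fin v} (hGB : G ⊆ B) (hxG : ∀ b ∈ G, x ∈ b) (ht : t ∈ B)
    (hxt : x ∉ t) (hyt : y ∈ t) (hyG : ∀ b ∈ G, y ∉ b) (hGt : ∀ b ∈ G, ¬Disjoint b t) :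
    #G ≤ k - 1 := by
  have hsub : ∀ b : Finset (Fin v), b ∩ t ⊆ b.erase x := fun b a ha =>
    mem_erase.2 ⟨ne_of_mem_of_not_mem (mem_inter.1 ha).2 hxt, (mem_inter.1 ha).1⟩
  have hdisj : (G : Set (Finset (Fin v))).PairwiseDisjoint (· ∩ t) := fun b₁ h₁ b₂ h₂ hne =>
    (hB.disjoint_erase (hGB h₁) (hGB h₂) hne (hxG b₁ h₁) (hxG b₂ h₂)).mono (hsub b₁) (hsub b₂)
  calc #G ≤ #(G.biUnion (· ∩ t)) :=
        card_le_card_biUnion hdisj fun b hb => not_disjoint_iff_nonempty_inter.1 (hGt b hb)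
    _ ≤ #(t.erase y) := card_le_card <| biUnion_subset.2 fun b hb a ha =>
        mem_erase.2 ⟨ne_of_mem_of_not_mem (mem_inter.1 ha).1 (hyG b hb), (mem_inter.1 ha).2⟩
    _ = k - 1 := by rw [card_erase_of_mem hyt, hB.1 t ht]

theorem card_filter_two_le_card_inter_add_le (hB : IsPacking v k B) (hk : 2 ≤ k)
    (hP : IsPPC B P) :
    #{b ∈ B | 2 ≤ #(b ∩ P.biUnion id)} + #P * k.choose 2 ≤ #P + (k * #P).choose 2 := by
  set S := P.biUnion id
  set B₂ := {b ∈ B | 2 ≤ #(b ∩ S)}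
  have hpS : ∀ p ∈ P, p ∩ S = p := fun p hp => inter_eq_left.2 (subset_biUnion_of_mem id hp)
  have hPB₂ : P ⊆ B₂ := fun p hp =>
    mem_filter.2 ⟨hP.1 hp, by rw [hpS p hp, hB.1 p (hP.1 hp)]; exact hk⟩
  have hdisj : (B₂ : Set (Finset (Fin v))).PairwiseDisjoint fun b => (b ∩ S).powersetCard 2 :=
    fun b₁ h₁ b₂ h₂ hne =>
      (hB.disjoint_powersetCard_two (mem_filter.1 h₁).1 (mem_filter.1 h₂).1 hne).mono
        (powersetCard_mono inter_subset_left) (powersetCard_mono inter_subset_left)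
  have hpairs : ∑ b ∈ B₂, #((b ∩ S).powersetCard 2) ≤ (k * #P).choose 2 := by
    rw [← card_biUnion hdisj, ← hB.card_biUnion_id hP, ← card_powersetCard]
    exact card_le_card (biUnion_subset.2 fun b _ => powersetCard_mono inter_subset_right)
  have hpairsP : ∑ b ∈ P, #((b ∩ S).powersetCard 2) = #P * k.choose 2 :=
    sum_const_nat fun p hp => by rw [card_powersetCard, hpS p hp, hB.1 p (hP.1 hp)]
  have hpairsRest : #(B₂ \ P) ≤ ∑ b ∈ B₂ \ P, #((b ∩ S).powersetCard 2) := by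
    simpa using card_nsmul_le_sum (B₂ \ P) (fun b => #((b ∩ S).powersetCard 2)) 1 fun b hb => by
      rw [card_powersetCard]
      exact Nat.choose_pos (mem_filter.1 (mem_sdiff.1 hb).1).2
  rw [← sum_sdiff hPB₂, hpairsP] at hpairs
  have := card_sdiff_add_card_eq_card hPB₂
  omega

end IsPacking

namespace IsMaximumPPC

theorem card_le_of_exchange (hB : IsPacking v k B) (hk : 0 < k) (hP : IsMaximumPPC B P)
    {Q R : Finset (Finset (Fin v))} (hQ : IsPPC B Q) (hRP : R ⊆ P)
    (hQR : ∀ q ∈ Q, ∀ p ∈ P \ R, Disjoint q p) : #Q ≤ #R := by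
  have hQPR : Disjoint Q (P \ R) := disjoint_left.2 fun q hq hqP => by
    have hq0 := disjoint_self.1 (hQR q hq q hqP)
    have := hB.1 q (hQ.1 hq)
    simp_all
  have hQ' : IsPPC B (Q ∪ (P \ R)) := by
    refine isPPC_iff.2 ⟨union_subset hQ.1 (sdiff_subset.trans hP.1.1), ?_⟩
    rw [coe_union]
    exact (isPPC_iff.1 hQ).2.union ((isPPC_iff.1 hP.1).2.subset (coe_subset.2 sdiff_subset))
      fun q hq p hp _ => hQR q hq p hp
  have := hP.2 _ hQ'
  rw [card_union_of_disjoint hQPR, card_sdiff_of_subset hRP] at this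
  have := card_le_card hRP
  omega

theorem inter_biUnion_nonempty (hB : IsPacking v k B) (hk : 0 < k) (hP : IsMaximumPPC B P)
    {b : Finset (Fin v)} (hb : b ∈ B) : (b ∩ P.biUnion id).Nonempty := by
  by_contra h
  rw [not_nonempty_iff_eq_empty, ← disjoint_iff_inter_eq_empty] at h
  have hb' : IsPPC B {b} :=
    ⟨singleton_subset_iff.2 hb, fun b₁ h₁ b₂ h₂ hne => absurd
      ((mem_singleton.1 h₁).trans (mem_singleton.1 h₂).symm) hne⟩
  have := hP.card_le_of_exchange hB hk hb' (empty_subset P) fun q hq p hp => by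
    rw [mem_singleton.1 hq]
    exact h.mono_right (subset_biUnion_of_mem id (mem_sdiff.1 hp).1)
  simp at this

theorem not_disjoint (hB : IsPacking v k B) (hk : 0 < k) (hP : IsMaximumPPC B P)
    {p b₁ b₂ : Finset (Fin v)} (hp : p ∈ P) (hb₁ : b₁ ∈ B) (hb₂ : b₂ ∈ B) (hne : b₁ ≠ b₂)
    (h₁ : b₁ ∩ P.biUnion id ⊆ p) (h₂ : b₂ ∩ P.biUnion id ⊆ p) : ¬Disjoint b₁ b₂ := by
  intro hdisj
  have hoff : ∀ b, b ∩ P.biUnion id ⊆ p → ∀ q ∈ P \ {p}, Disjoint b q := by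
    intro b hb q hq
    obtain ⟨hqP, hqp⟩ := mem_sdiff.1 hq
    refine disjoint_left.2 fun a hab haq => ?_
    have hap := hb (mem_inter.2 ⟨hab, subset_biUnion_of_mem id hqP haq⟩)
    exact disjoint_left.1 (hP.1.2 q hqP p hp (by simpa using hqp)) haq hap
  have hpair : IsPPC B {b₁, b₂} := by
    refine isPPC_iff.2 ⟨insert_subset hb₁ (singleton_subset_iff.2 hb₂), ?_⟩
    rw [coe_pair]
    exact Set.pairwise_pair.2 fun _ => ⟨hdisj, hdisj.symm⟩
  have := hP.card_le_of_exchange hB hk hpair (singleton_subset_iff.2 hp) fun q hq => by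
    rcases mem_insert.1 hq with rfl | hq
    · exact hoff q h₁
    · rw [mem_singleton.1 hq]; exact hoff b₂ h₂
  rw [card_pair hne, card_singleton] at this
  omega

theorem card_le_or_mul_card_le (hB : IsPacking v k B) (hk : 0 < k) (hP : IsMaximumPPC B P)
    {p : Finset (Fin v)} (hp : p ∈ P) {F : Finset (Finset (Fin v))} (hFB : F ⊆ B)
    (hF : ∀ b ∈ F, ∃ x ∈ p, b ∩ P.biUnion id = {x}) :
    #F ≤ k * (k - 1) ∨ (k - 1) * #F ≤ v - k * #P := by
  set S := P.biUnion id
  have hpS : p ⊆ S := subset_biUnion_of_mem id hp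
  have eq_of_mem : ∀ {b x z}, b ∩ S = {x} → z ∈ b → z ∈ S → z = x := fun hbx hzb hzS =>
    (eq_singleton_iff_unique_mem.1 hbx).2 _ (mem_inter.2 ⟨hzb, hzS⟩)
  by_cases hsun : ∃ x, ∀ b ∈ F, b ∩ S = {x}
  · obtain ⟨x, hx⟩ := hsun
    right
    have := hB.mul_card_le_card_compl hFB hx
    rwa [card_compl, Fintype.card_fin, hB.card_biUnion_id hP.1] at this
  push Not at hsun
  left
  have hFp : F ⊆ p.biUnion fun x => {b ∈ F | x ∈ b} := fun b hb => by
    obtain ⟨x, hxp, hbx⟩ := hF b hb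
    exact mem_biUnion.2 ⟨x, hxp, mem_filter.2 ⟨hb, (mem_inter.1 (hbx ▸ mem_singleton_self x)).1⟩⟩
  calc #F ≤ #(p.biUnion fun x => {b ∈ F | x ∈ b}) := card_le_card hFp
    _ ≤ #p * (k - 1) := card_biUnion_le_card_mul _ _ _ fun x hxp => ?_
    _ = k * (k - 1) := by rw [hB.1 p (hP.1.1 hp)]
  obtain ⟨t, htF, htx⟩ := hsun x
  obtain ⟨y, hyp, hty⟩ := hF t htF
  have hxy : x ≠ y := by rintro rfl; exact htx hty
  have hxt : x ∉ t := fun hxt => hxy (eq_of_mem hty hxt (hpS hxp))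
  refine hB.card_le_of_not_disjoint (filter_subset _ F |>.trans hFB)
    (fun b hb => (mem_filter.1 hb).2) (hFB htF) hxt
    (mem_inter.1 (hty ▸ mem_singleton_self y)).1 (fun b hb hyb => ?_) (fun b hb => ?_)
  · obtain ⟨hbF, hxb⟩ := mem_filter.1 hb
    obtain ⟨z, -, hbz⟩ := hF b hbF
    exact hxy ((eq_of_mem hbz hxb (hpS hxp)).trans (eq_of_mem hbz hyb (hpS hyp)).symm)
  · obtain ⟨hbF, hxb⟩ := mem_filter.1 hb
    obtain ⟨z, hzp, hbz⟩ := hF b hbF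
    exact hP.not_disjoint hB hk hp (hFB hbF) (hFB htF) (fun h => hxt (h ▸ hxb))
      (hbz ▸ singleton_subset_iff.2 hzp) (hty ▸ singleton_subset_iff.2 hyp)

theorem card_add_le (hB : IsPacking v k B) (hk : 2 ≤ k) (hP : IsMaximumPPC B P) :
    #B + #P * k.choose 2 ≤
      #P + (k * #P).choose 2 + #P * max (k * (k - 1)) ((v - k * #P) / (k - 1)) := by
  have hsplit := card_filter_add_card_filter_not (s := B) fun b => 2 ≤ #(b ∩ P.biUnion id)
  have hsecant := hB.card_filter_two_le_card_inter_add_le hk hP.1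
  have htangent : #{b ∈ B | ¬2 ≤ #(b ∩ P.biUnion id)} ≤
      #P * max (k * (k - 1)) ((v - k * #P) / (k - 1)) := by
    calc _ ≤ #(P.biUnion fun p => {b ∈ B | ∃ x ∈ p, b ∩ P.biUnion id = {x}}) := card_le_card ?_
      _ ≤ _ := card_biUnion_le_card_mul _ _ _ fun p hp => ?_
    · intro b hb
      obtain ⟨hbB, hb2⟩ := mem_filter.1 hb
      have := (hP.inter_biUnion_nonempty hB (by omega) hbB).card_pos
      obtain ⟨x, hbx⟩ := card_eq_one.1 (show #(b ∩ P.biUnion id) = 1 by omega)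
      obtain ⟨p, hp, hxp⟩ := mem_biUnion.1 (mem_inter.1 (hbx ▸ mem_singleton_self x)).2
      exact mem_biUnion.2 ⟨p, hp, mem_filter.2 ⟨hbB, x, hxp, hbx⟩⟩
    · rcases hP.card_le_or_mul_card_le hB (by omega) hp (filter_subset _ B)
        (fun b hb => (mem_filter.1 hb).2) with h | h
      · exact le_max_of_le_left h
      · exact le_max_of_le_right ((Nat.le_div_iff_mul_le (by omega)).2 (by rwa [mul_comm]))
  omega

end IsMaximumPPC

end

theorem stmt1_general (ρ v : ℕ) :
    beta ρ v 4 ≤ ρ * ((8 * ρ - 7) + max 12 ((v - 4 * ρ) / 3)) := by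
  refine csSup_le' ?_
  rintro _ ⟨B, hB, ⟨⟨P, hP, rfl⟩, hmax⟩, rfl⟩
  have hbound := IsMaximumPPC.card_add_le hB (by norm_num) ⟨hP, hmax⟩
  have hchoose : (4 * #P).choose 2 ≤ 2 * #P * (4 * #P - 1) :=
    Nat.choose_two_right _ ▸ Nat.div_le_of_le_mul (le_of_eq (by ring))
  norm_num [show Nat.choose 4 2 = 6 from rfl] at hbound
  generalize #P = ρ at hbound hchoose ⊢
  rcases ρ with _ | ρ
  · simpa using hbound
  · rw [show 4 * (ρ + 1) - 1 = 4 * ρ + 3 by omega] at hchoose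
    rw [show 8 * (ρ + 1) - 7 = 8 * ρ + 1 by omega]
    generalize max 12 ((v - 4 * (ρ + 1)) / 3) = M at hbound ⊢
    linarith

theorem stmt1 (ρ v : ℕ) (hρ : 1 ≤ ρ) (hv : 4 * ρ ≤ v) :
    beta ρ v 4 ≤ ρ * ((8 * ρ - 7) + max 12 ((v - 4 * ρ) / 3)) :=
  stmt1_general ρ v
end

section
/- If v ≥ 4ρ + 36, then β(ρ,v,4) ≤ ρv/3 + 20ρ²/3 − 7ρ. -/
open Finset

variable {v k : ℕ} {B P : Finset (Finset (Fin v))}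

def covered (P : Finset (Finset (Fin v))) : Finset (Fin v) := P.biUnion id

lemma subset_covered {p : Finset (Fin v)} (hp : p ∈ P) : p ⊆ covered P :=
  subset_biUnion_of_mem id hp

lemma card_covered (hB : ∀ b ∈ B, b.card = k) (hP : IsPPC B P) :
    (covered P).card = k * P.card := by
  rw [covered, card_biUnion (t := id) hP.2]
  exact (sum_const_nat fun p hp => hB p (hP.1 hp)).trans (mul_comm _ _)

lemma IsPPC.subset {Q : Finset (Finset (Fin v))} (hP : IsPPC B P) (hQ : Q ⊆ P) : IsPPC B Q :=
  ⟨hQ.trans hP.1, fun b₁ h₁ b₂ h₂ => hP.2 b₁ (hQ h₁) b₂ (hQ h₂)⟩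

lemma IsPPC.insert {b : Finset (Fin v)} (hP : IsPPC B P) (hb : b ∈ B)
    (hdisj : ∀ p ∈ P, Disjoint b p) : IsPPC B (insert b P) := by
  refine ⟨insert_subset hb hP.1, ?_⟩
  simp only [mem_insert]
  rintro b₁ (rfl | h₁) b₂ (rfl | h₂) hne
  · exact absurd rfl hne
  · exact hdisj b₂ h₂
  · exact (hdisj b₁ h₁).symm
  · exact hP.2 b₁ h₁ b₂ h₂ hne

lemma inter_covered_nonempty (hP : IsPPC B P) (hmax : ∀ Q, IsPPC B Q → Q.card ≤ P.card)
    {b : Finset (Fin v)} (hb : b ∈ B) (hne : b.Nonempty) : (b ∩ covered P).Nonempty := by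
  by_contra h
  have hdisj : ∀ p ∈ P, Disjoint b p := fun p hp =>
    (disjoint_iff_inter_eq_empty.2 (not_nonempty_iff_eq_empty.1 h)).mono_right
      (subset_covered hp)
  have hbP : b ∉ P := fun hbP => hne.ne_empty (disjoint_self.1 (hdisj b hbP))
  have := hmax _ (hP.insert hb hdisj)
  rw [card_insert_of_notMem hbP] at this
  omega

lemma disjoint_of_inter_covered_subset (hP : IsPPC B P) {p q c : Finset (Fin v)} (hp : p ∈ P)
    (hq : q ∈ P) (hqp : q ≠ p) (hc : c ∩ covered P ⊆ p) : Disjoint c q :=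
  disjoint_left.2 fun _ hzc hzq =>
    disjoint_left.1 (hP.2 q hq p hp hqp) hzq (hc (mem_inter.2 ⟨hzc, subset_covered hq hzq⟩))

/-- Otherwise `b` and `b'` could replace `p` in `P`. -/
lemma not_disjoint_of_inter_covered_subset (hP : IsPPC B P)
    (hmax : ∀ Q, IsPPC B Q → Q.card ≤ P.card) {p b b' : Finset (Fin v)} (hp : p ∈ P)
    (hb : b ∈ B) (hb' : b' ∈ B) (hbP : b ∉ P) (hb'P : b' ∉ P) (hbb' : b ≠ b')
    (hbp : b ∩ covered P ⊆ p) (hb'p : b' ∩ covered P ⊆ p) : ¬ Disjoint b b' := by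
  intro hdisj
  have hQ : IsPPC B (insert b (insert b' (P.erase p))) := by
    refine ((hP.subset (erase_subset p P)).insert hb' fun q hq => ?_).insert hb fun q hq => ?_
    · exact disjoint_of_inter_covered_subset hP hp (mem_of_mem_erase hq) (ne_of_mem_erase hq) hb'p
    · rcases mem_insert.1 hq with rfl | hq
      · exact hdisj
      · exact disjoint_of_inter_covered_subset hP hp (mem_of_mem_erase hq) (ne_of_mem_erase hq) hbp
  have := hmax _ hQ
  rw [card_insert_of_notMem, card_insert_of_notMem, card_erase_of_mem hp] at this
  · have := card_pos.2 ⟨p, hp⟩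
    omega
  · exact fun h => hb'P (mem_of_mem_erase h)
  · simp only [mem_insert, not_or]
    exact ⟨hbb', fun h => hbP (mem_of_mem_erase h)⟩

lemma IsPacking.disjoint_sdiff (hB : IsPacking v k B) {b b' S : Finset (Fin v)} {x : Fin v}
    (hb : b ∈ B) (hb' : b' ∈ B) (hne : b ≠ b') (hx : x ∈ b ∩ b') (hxS : x ∈ S) :
    Disjoint (b \ S) (b' \ S) := by
  refine disjoint_left.2 fun z hz hz' => (mem_sdiff.1 hz).2 ?_
  rw [mem_sdiff] at hz hz'
  rwa [card_le_one.1 (hB.2 b hb b' hb' hne) z (mem_inter.2 ⟨hz.1, hz'.1⟩) x hx]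

lemma IsPacking.disjoint_powersetCard_two_s2 (hB : IsPacking v k B) {b b' : Finset (Fin v)}
    (hb : b ∈ B) (hb' : b' ∈ B) (hne : b ≠ b') :
    Disjoint (b.powersetCard 2) (b'.powersetCard 2) := by
  refine disjoint_left.2 fun t ht ht' => ?_
  rw [mem_powersetCard] at ht ht'
  have := card_le_card (subset_inter ht.1 ht'.1)
  have := hB.2 b hb b' hb' hne
  omega

def anchoredAt (B P : Finset (Finset (Fin v))) (x : Fin v) : Finset (Finset (Fin v)) :=
  B.filter fun b => b ∩ covered P = {x}

section anchoredAt

variable {b : Finset (Fin v)} {x : Fin v}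

lemma mem_of_mem_anchoredAt (hb : b ∈ anchoredAt B P x) : b ∈ B := (mem_filter.1 hb).1

lemma inter_covered_of_mem_anchoredAt (hb : b ∈ anchoredAt B P x) : b ∩ covered P = {x} :=
  (mem_filter.1 hb).2

lemma mem_inter_covered_of_mem_anchoredAt (hb : b ∈ anchoredAt B P x) :
    x ∈ b ∩ covered P := by
  rw [inter_covered_of_mem_anchoredAt hb]
  exact mem_singleton_self x

lemma card_sdiff_covered_of_mem_anchoredAt (hB : ∀ b ∈ B, b.card = k)
    (hb : b ∈ anchoredAt B P x) : (b \ covered P).card = k - 1 := by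
  have := card_inter_add_card_sdiff b (covered P)
  rw [inter_covered_of_mem_anchoredAt hb, hB b (mem_of_mem_anchoredAt hb), card_singleton] at this
  omega

lemma notMem_of_mem_anchoredAt (hB : ∀ b ∈ B, b.card = k) (hk : 1 < k)
    (hb : b ∈ anchoredAt B P x) : b ∉ P := by
  intro hbP
  have h := inter_covered_of_mem_anchoredAt hb
  rw [inter_eq_left.2 (subset_covered hbP)] at h
  have := hB b (mem_of_mem_anchoredAt hb)
  rw [h, card_singleton] at this
  omega

/-- The tails `b \ covered P` of blocks anchored at one point are disjoint. -/
lemma mul_card_anchoredAt_add_le (hB : IsPacking v k B) (hP : IsPPC B P) :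
    (k - 1) * (anchoredAt B P x).card + k * P.card ≤ v := by
  have htails : ((anchoredAt B P x).biUnion fun b => b \ covered P).card =
      (k - 1) * (anchoredAt B P x).card := by
    rw [card_biUnion, sum_congr rfl fun b hb => card_sdiff_covered_of_mem_anchoredAt hB.1 hb,
      sum_const, smul_eq_mul, mul_comm]
    intro b hb b' hb' hne
    have hx := mem_inter_covered_of_mem_anchoredAt hb
    have hx' := mem_inter_covered_of_mem_anchoredAt hb'
    exact hB.disjoint_sdiff (mem_of_mem_anchoredAt hb) (mem_of_mem_anchoredAt hb') hne
      (mem_inter.2 ⟨(mem_inter.1 hx).1, (mem_inter.1 hx').1⟩) (mem_inter.1 hx).2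
  have hsub : ((anchoredAt B P x).biUnion fun b => b \ covered P) ⊆ (covered P)ᶜ :=
    biUnion_subset.2 fun b _ => fun z hz => mem_compl.2 (mem_sdiff.1 hz).2
  have := card_le_card hsub
  rw [htails, card_compl, Fintype.card_fin, card_covered hB.1 hP] at this
  have := card_le_univ (covered P)
  rw [Fintype.card_fin, card_covered hB.1 hP] at this
  omega

/-- Each `b` anchored at `x` meets the tail of `c` (anchored at `y`) outside `covered P`, and
these meets are disjoint because the tails of blocks anchored at `x` are. -/
lemma card_anchoredAt_le (hB : IsPacking v k B) (hk : 1 < k) (hP : IsPPC B P)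
    (hmax : ∀ Q, IsPPC B Q → Q.card ≤ P.card) {p c : Finset (Fin v)} {y : Fin v}
    (hp : p ∈ P) (hx : x ∈ p) (hy : y ∈ p) (hxy : x ≠ y) (hc : c ∈ anchoredAt B P y) :
    (anchoredAt B P x).card ≤ k - 1 := by
  set S := covered P
  have hmeet : ∀ b ∈ anchoredAt B P x, (b ∩ (c \ S)).Nonempty := by
    intro b hb
    have hbS := inter_covered_of_mem_anchoredAt hb
    have hcS := inter_covered_of_mem_anchoredAt hc
    have hbc : b ≠ c := fun h => hxy (singleton_injective (hbS.symm.trans (h ▸ hcS)))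
    obtain ⟨z, hz⟩ := not_disjoint_iff_nonempty_inter.1 <|
      not_disjoint_of_inter_covered_subset hP hmax hp (mem_of_mem_anchoredAt hb)
        (mem_of_mem_anchoredAt hc) (notMem_of_mem_anchoredAt hB.1 hk hb)
        (notMem_of_mem_anchoredAt hB.1 hk hc) hbc
        (hbS ▸ singleton_subset_iff.2 hx) (hcS ▸ singleton_subset_iff.2 hy)
    rw [mem_inter] at hz
    refine ⟨z, mem_inter.2 ⟨hz.1, mem_sdiff.2 ⟨hz.2, fun hzS => hxy ?_⟩⟩⟩
    have hzx := mem_singleton.1 (hbS ▸ mem_inter.2 ⟨hz.1, hzS⟩)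
    have hzy := mem_singleton.1 (hcS ▸ mem_inter.2 ⟨hz.2, hzS⟩)
    exact hzx.symm.trans hzy
  have hdisj :
      (anchoredAt B P x : Set (Finset (Fin v))).PairwiseDisjoint fun b => b ∩ (c \ S) := by
    intro b hb b' hb' hne
    have hx := mem_inter_covered_of_mem_anchoredAt hb
    have hx' := mem_inter_covered_of_mem_anchoredAt hb'
    refine (hB.disjoint_sdiff (mem_of_mem_anchoredAt hb) (mem_of_mem_anchoredAt hb') hne
      (mem_inter.2 ⟨(mem_inter.1 hx).1, (mem_inter.1 hx').1⟩) (mem_inter.1 hx).2).mono ?_ ?_ <;>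
    exact fun z hz => mem_sdiff.2 ⟨(mem_inter.1 hz).1, (mem_sdiff.1 (mem_inter.1 hz).2).2⟩
  calc (anchoredAt B P x).card
      ≤ ((anchoredAt B P x).biUnion fun b => b ∩ (c \ S)).card :=
        card_le_card_biUnion hdisj hmeet
    _ ≤ (c \ S).card := card_le_card (biUnion_subset.2 fun b _ => inter_subset_right)
    _ = k - 1 := card_sdiff_covered_of_mem_anchoredAt hB.1 hc

end anchoredAt

lemma mul_card_biUnion_anchoredAt_add_le (hB : IsPacking v k B) (hk : 1 < k) (hP : IsPPC B P)
    (hmax : ∀ Q, IsPPC B Q → Q.card ≤ P.card) (hv : k * P.card + k * (k - 1) ^ 2 ≤ v)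
    {p : Finset (Fin v)} (hp : p ∈ P) :
    (k - 1) * (p.biUnion (anchoredAt B P)).card + k * P.card ≤ v := by
  by_cases h : ∃ x ∈ p, ∃ y ∈ p, x ≠ y ∧ (anchoredAt B P x).Nonempty ∧
      (anchoredAt B P y).Nonempty
  · obtain ⟨x, hx, y, hy, hxy, ⟨c, hc⟩, ⟨d, hd⟩⟩ := h
    have hle : ∀ z ∈ p, (anchoredAt B P z).card ≤ k - 1 := by
      intro z hz
      by_cases hzy : z = y
      · exact hzy ▸ card_anchoredAt_le hB hk hP hmax hp hy hx hxy.symm hc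
      · exact card_anchoredAt_le hB hk hP hmax hp hz hy hzy hd
    have := Nat.mul_le_mul_left (k - 1) (card_biUnion_le_card_mul _ _ _ hle)
    rw [hB.1 p (hP.1 hp)] at this
    nlinarith
  · push Not at h
    obtain he | ⟨b, hb⟩ := (p.biUnion (anchoredAt B P)).eq_empty_or_nonempty
    · rw [he, card_empty, mul_zero, zero_add]
      omega
    obtain ⟨x, hx, hbx⟩ := mem_biUnion.1 hb
    have hsub : p.biUnion (anchoredAt B P) ⊆ anchoredAt B P x := by
      intro b' hb'
      obtain ⟨y, hy, hb'y⟩ := mem_biUnion.1 hb'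
      by_cases hxy : x = y
      · exact hxy ▸ hb'y
      · exact absurd (h x hx y hy hxy ⟨b, hbx⟩ ▸ hb'y) (notMem_empty b')
    have := Nat.mul_le_mul_left (k - 1) (card_le_card hsub)
    have := mul_card_anchoredAt_add_le (x := x) hB hP
    omega

lemma mul_card_anchored_add_le (hB : IsPacking v k B) (hk : 1 < k) (hP : IsPPC B P)
    (hmax : ∀ Q, IsPPC B Q → Q.card ≤ P.card) (hv : k * P.card + k * (k - 1) ^ 2 ≤ v) :
    (k - 1) * ((covered P).biUnion (anchoredAt B P)).card + P.card * (k * P.card) ≤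
      P.card * v := by
  have hsum := sum_le_sum fun p hp => mul_card_biUnion_anchoredAt_add_le hB hk hP hmax hv hp
  rw [sum_add_distrib, ← mul_sum, sum_const, sum_const, smul_eq_mul, smul_eq_mul] at hsum
  have : ((covered P).biUnion (anchoredAt B P)).card ≤
      ∑ p ∈ P, (p.biUnion (anchoredAt B P)).card := by
    rw [covered, biUnion_biUnion]
    exact card_biUnion_le
  nlinarith

def crossPairs (P : Finset (Finset (Fin v))) : Finset (Finset (Fin v)) :=
  (covered P).powersetCard 2 \ P.biUnion (powersetCard 2)

lemma card_crossPairs_add (hB : ∀ b ∈ B, b.card = k) (hP : IsPPC B P) :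
    (crossPairs P).card + P.card * k.choose 2 = (k * P.card).choose 2 := by
  have hsub : P.biUnion (powersetCard 2) ⊆ (covered P).powersetCard 2 :=
    biUnion_subset.2 fun p hp => powersetCard_mono (subset_covered hp)
  have hdisj : (P : Set (Finset (Fin v))).PairwiseDisjoint (powersetCard 2) := by
    intro p hp q hq hpq
    refine disjoint_left.2 fun t htp htq => ?_
    rw [mem_powersetCard] at htp htq
    have ht := disjoint_self.1 ((hP.2 p hp q hq hpq).mono htp.1 htq.1)
    rw [ht] at htp
    simp at htp
  rw [crossPairs, ← card_covered hB hP, ← card_powersetCard,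
    ← card_sdiff_add_card_eq_card hsub, card_biUnion hdisj,
    sum_const_nat fun p hp => by rw [card_powersetCard, hB p (hP.1 hp)]]

lemma card_filter_le_card_crossPairs (hB : IsPacking v k B) (hP : IsPPC B P) :
    (B.filter fun b => b ∉ P ∧ 2 ≤ (b ∩ covered P).card).card ≤ (crossPairs P).card := by
  set F := B.filter fun b => b ∉ P ∧ 2 ≤ (b ∩ covered P).card
  have hdisj : (F : Set (Finset (Fin v))).PairwiseDisjoint
      fun b => (b ∩ covered P).powersetCard 2 := by
    intro b hb b' hb' hne
    exact (hB.disjoint_powersetCard_two_s2 (mem_filter.1 hb).1 (mem_filter.1 hb').1 hne).mono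
      (powersetCard_mono inter_subset_left) (powersetCard_mono inter_subset_left)
  have hsub : (F.biUnion fun b => (b ∩ covered P).powersetCard 2) ⊆ crossPairs P := by
    refine biUnion_subset.2 fun b hb t ht => ?_
    obtain ⟨hbB, hbP, -⟩ := mem_filter.1 hb
    refine mem_sdiff.2 ⟨powersetCard_mono inter_subset_right ht, fun htP => ?_⟩
    obtain ⟨p, hp, htp⟩ := mem_biUnion.1 htP
    exact disjoint_left.1 (hB.disjoint_powersetCard_two_s2 hbB (hP.1 hp) fun h => hbP (h ▸ hp))
      (powersetCard_mono inter_subset_left ht) htp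
  calc F.card ≤ (F.biUnion fun b => (b ∩ covered P).powersetCard 2).card :=
        card_le_card_biUnion hdisj fun b hb => powersetCard_nonempty.2 (mem_filter.1 hb).2.2
    _ ≤ (crossPairs P).card := card_le_card hsub

lemma card_le_card_add_card_add_card (hB : ∀ b ∈ B, b.card = k) (hk : 0 < k) (hP : IsPPC B P)
    (hmax : ∀ Q, IsPPC B Q → Q.card ≤ P.card) :
    B.card ≤ P.card + ((covered P).biUnion (anchoredAt B P)).card +
      (B.filter fun b => b ∉ P ∧ 2 ≤ (b ∩ covered P).card).card := by
  refine (card_le_card ?_).trans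
    ((card_union_le _ _).trans (Nat.add_le_add_right (card_union_le _ _) _))
  intro b hb
  by_cases hbP : b ∈ P
  · exact mem_union_left _ (mem_union_left _ hbP)
  have hne := inter_covered_nonempty hP hmax hb (card_pos.1 (by rw [hB b hb]; exact hk))
  rcases (one_le_card.2 hne).eq_or_lt with h1 | h2
  · obtain ⟨x, hx⟩ := card_eq_one.1 h1.symm
    have hxS : x ∈ covered P := mem_of_mem_inter_right (hx ▸ mem_singleton_self x)
    exact mem_union_left _ <| mem_union_right _ <|
      mem_biUnion.2 ⟨x, hxS, mem_filter.2 ⟨hb, hx⟩⟩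
  · exact mem_union_right _ (mem_filter.2 ⟨hb, hbP, h2⟩)

lemma choose_two_four_mul_add (n : ℕ) : (4 * n).choose 2 + 2 * n = 8 * n ^ 2 := by
  have : ((4 * n).choose 2 : ℚ) + 2 * n = 8 * n ^ 2 := by
    rw [Nat.cast_choose_two]
    push_cast
    ring
  exact_mod_cast this

lemma card_le_of_maxPPCSize {ρ : ℕ} (hB : IsPacking v 4 B) (hmax : MaxPPCSize B ρ)
    (hv : 4 * ρ + 36 ≤ v) : 3 * B.card + 21 * ρ ≤ ρ * v + 20 * ρ ^ 2 := by
  obtain ⟨⟨P, hP, rfl⟩, hmax⟩ := hmax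
  have hsplit := card_le_card_add_card_add_card hB.1 (by norm_num) hP hmax
  have hanchored := mul_card_anchored_add_le hB (by norm_num) hP hmax (by norm_num; omega)
  have hcross := card_filter_le_card_crossPairs hB hP
  have hpairs := card_crossPairs_add hB.1 hP
  have := choose_two_four_mul_add P.card
  rw [show Nat.choose 4 2 = 6 from rfl] at hpairs
  norm_num at hanchored
  linarith

lemma beta_le_of_card_le {ρ n : ℕ}
    (h : ∀ B, IsPacking v k B → MaxPPCSize B ρ → B.card ≤ n) : beta ρ v k ≤ n :=
  csSup_le' fun _ ⟨B, hB, hmax, hcard⟩ => hcard ▸ h B hB hmax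

theorem stmt2_general (ρ v : ℕ) (hv : 4 * ρ + 36 ≤ v) :
    (beta ρ v 4 : ℚ) ≤ (ρ : ℚ) * v / 3 + 20 * (ρ : ℚ) ^ 2 / 3 - 7 * ρ := by
  have hpos : 21 * ρ ≤ ρ * v + 20 * ρ ^ 2 := by nlinarith
  have hbeta : 3 * beta ρ v 4 + 21 * ρ ≤ ρ * v + 20 * ρ ^ 2 := by
    have := beta_le_of_card_le (n := (ρ * v + 20 * ρ ^ 2 - 21 * ρ) / 3) fun B hB hmax => by
      have := card_le_of_maxPPCSize hB hmax hv
      omega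
    omega
  have hbetaQ : (3 * beta ρ v 4 + 21 * ρ : ℚ) ≤ ρ * v + 20 * ρ ^ 2 := by
    exact_mod_cast hbeta
  linarith

theorem stmt2 (ρ v : ℕ) (hρ : 1 ≤ ρ) (hv : 4 * ρ + 36 ≤ v) :
    (beta ρ v 4 : ℚ) ≤ (ρ : ℚ) * v / 3 + 20 * (ρ : ℚ) ^ 2 / 3 - 7 * ρ :=
  stmt2_general ρ v hv
end

section
/- In a (v,4)-packing with a maximum PPC 𝒫 of size ρ, for any point x contained in a block of 𝒫, the inequalities 3t_x³ + 2t_x² + t_x¹ ≤ v − 4ρ and t_x² + 2t_x¹ + 3t_x⁰ ≤ 4(ρ−1) hold, where t_x^i is the number of blocks not in 𝒫 containing x and exactly i points outside the blocks of 𝒫. -/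
/-!
Two blocks of a packing through `x` meet only in `x`, so the blocks through `x` outside the PPC
are disjoint away from `x`. Counting the points they have outside the PPC gives
`3t³ + 2t² + t¹ ≤ v - 4ρ`. Counting the points they have in the PPC but outside the PPC block
`p ∋ x` gives `t² + 2t¹ + 3t⁰ ≤ 4(ρ - 1)`: a block with `i` points outside the PPC has `3 - i`
such points, because it meets `p` only in `x`.
-/

open Finset

section Counting

variable {α : Type*} [DecidableEq α]

theorem sum_card_inter_le_card_of_pairwise_inter_le_one {F : Finset (Finset α)} {x : α}
    {U : Finset α} (hxF : ∀ b ∈ F, x ∈ b)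
    (hF : ∀ b₁ ∈ F, ∀ b₂ ∈ F, b₁ ≠ b₂ → (b₁ ∩ b₂).card ≤ 1) (hxU : x ∉ U) :
    ∑ b ∈ F, (b ∩ U).card ≤ U.card := by
  have hdisj : (F : Set (Finset α)).PairwiseDisjoint (· ∩ U) := by
    intro b₁ h₁ b₂ h₂ hne
    refine disjoint_left.2 fun y hy₁ hy₂ => ?_
    rw [mem_inter] at hy₁ hy₂
    have hyx : y = x := card_le_one.1 (hF b₁ h₁ b₂ h₂ hne) y (mem_inter.2 ⟨hy₁.1, hy₂.1⟩) x
      (mem_inter.2 ⟨hxF b₁ h₁, hxF b₂ h₂⟩)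
    exact hxU (hyx ▸ hy₁.2)
  rw [← card_biUnion hdisj]
  exact card_le_card (biUnion_subset.2 fun _ _ => inter_subset_right)

theorem card_inter_sdiff_add_card_sdiff {b p S : Finset α} {x : α} (hxb : x ∈ b) (hxp : x ∈ p)
    (hxS : x ∈ S) (hbp : (b ∩ p).card ≤ 1) :
    (b ∩ (S \ p)).card + (b \ S).card + 1 = b.card := by
  have hinter : b ∩ (S \ p) = (b ∩ S).erase x := by
    ext y
    simp only [mem_inter, mem_sdiff, mem_erase]
    constructor
    · rintro ⟨hyb, hyS, hyp⟩
      exact ⟨fun hyx => hyp (hyx ▸ hxp), hyb, hyS⟩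
    · rintro ⟨hyx, hyb, hyS⟩
      exact ⟨hyb, hyS, fun hyp => hyx (card_le_one.1 hbp y (mem_inter.2 ⟨hyb, hyp⟩) x
        (mem_inter.2 ⟨hxb, hxp⟩))⟩
  rw [hinter, card_erase_of_mem (mem_inter.2 ⟨hxb, hxS⟩), ← card_sdiff_add_card_inter b S]
  have : 0 < (b ∩ S).card := card_pos.2 ⟨x, mem_inter.2 ⟨hxb, hxS⟩⟩
  omega

end Counting

theorem sum_comp_eq_sum_range_card_filter_smul {β M : Type*} [AddCommMonoid M] (s : Finset β)
    (g : β → ℕ) {n : ℕ} (hg : ∀ b ∈ s, g b < n) (f : ℕ → M) :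
    ∑ b ∈ s, f (g b) = ∑ i ∈ range n, #(s.filter (g · = i)) • f i := by
  rw [← sum_fiberwise_of_maps_to (fun b hb => mem_range.2 (hg b hb))]
  refine sum_congr rfl fun i _ => ?_
  rw [sum_congr rfl fun b hb => by rw [(mem_filter.1 hb).2], sum_const]

section Packing

variable {v k : ℕ} {B P : Finset (Finset (Fin v))} {p : Finset (Fin v)} {x : Fin v}

theorem card_sup_id_of_isPPC (hB : ∀ b ∈ B, b.card = k) (hP : IsPPC B P) :
    (P.sup id).card = k * P.card := by
  rw [sup_eq_biUnion, card_biUnion (t := id) fun b₁ h₁ b₂ h₂ hne => hP.2 b₁ h₁ b₂ h₂ hne,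
    sum_congr rfl fun b hb => (hB b (hP.1 hb) : (id b).card = k), sum_const, smul_eq_mul, mul_comm]

def blocksThrough (B P : Finset (Finset (Fin v))) (x : Fin v) : Finset (Finset (Fin v)) :=
  (B \ P).filter (x ∈ ·)

theorem mem_blocksThrough {b : Finset (Fin v)} :
    b ∈ blocksThrough B P x ↔ (b ∈ B ∧ b ∉ P) ∧ x ∈ b := by
  rw [blocksThrough, mem_filter, mem_sdiff]

theorem card_inter_le_one_of_mem_blocksThrough (hB : IsPacking v k B) :
    ∀ b₁ ∈ blocksThrough B P x, ∀ b₂ ∈ blocksThrough B P x, b₁ ≠ b₂ → (b₁ ∩ b₂).card ≤ 1 :=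
  fun b₁ h₁ b₂ h₂ => hB.2 b₁ (mem_blocksThrough.1 h₁).1.1 b₂ (mem_blocksThrough.1 h₂).1.1

theorem sum_card_sdiff_blocksThrough_le (hB : IsPacking v k B) (hP : IsPPC B P)
    (hx : x ∈ P.sup id) :
    ∑ b ∈ blocksThrough B P x, (b \ P.sup id).card ≤ v - k * P.card := by
  simp_rw [sdiff_eq_inter_compl]
  calc _ ≤ (P.sup id)ᶜ.card :=
        sum_card_inter_le_card_of_pairwise_inter_le_one (fun b hb => (mem_blocksThrough.1 hb).2)
          (card_inter_le_one_of_mem_blocksThrough hB) fun h => mem_compl.1 h hx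
    _ = v - k * P.card := by rw [card_compl, card_sup_id_of_isPPC hB.1 hP, Fintype.card_fin]

theorem sum_card_inter_sdiff_blocksThrough_le (hB : IsPacking v k B) (hP : IsPPC B P)
    (hp : p ∈ P) (hxp : x ∈ p) :
    ∑ b ∈ blocksThrough B P x, (b ∩ (P.sup id \ p)).card ≤ k * (P.card - 1) := by
  calc _ ≤ (P.sup id \ p).card :=
        sum_card_inter_le_card_of_pairwise_inter_le_one (fun b hb => (mem_blocksThrough.1 hb).2)
          (card_inter_le_one_of_mem_blocksThrough hB) fun h => (mem_sdiff.1 h).2 hxp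
    _ = k * (P.card - 1) := by
      rw [card_sdiff_of_subset (show p ⊆ P.sup id from le_sup (f := id) hp),
        card_sup_id_of_isPPC hB.1 hP, hB.1 p (hP.1 hp), Nat.mul_sub_one]

theorem card_inter_sdiff_add_card_sdiff_of_mem_blocksThrough (hB : IsPacking v k B)
    (hP : IsPPC B P) (hp : p ∈ P) (hxp : x ∈ p) {b : Finset (Fin v)}
    (hb : b ∈ blocksThrough B P x) :
    (b ∩ (P.sup id \ p)).card + (b \ P.sup id).card + 1 = k := by
  obtain ⟨⟨hbB, hbP⟩, hxb⟩ := mem_blocksThrough.1 hb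
  rw [← hB.1 b hbB]
  exact card_inter_sdiff_add_card_sdiff hxb hxp (le_sup (f := id) hp hxp)
    (hB.2 b hbB p (hP.1 hp) fun h => hbP (h ▸ hp))

end Packing

theorem stmt3_general (v ρ : ℕ) (B : Finset (Finset (Fin v)))
    (hpack : IsPacking v 4 B)
    (P : Finset (Finset (Fin v)))
    (hPPC : IsPPC B P) (hcard : P.card = ρ)
    (t : Fin v → ℕ → ℕ)
    (ht : ∀ p i, t p i =
      ((B \ P).filter (fun b => p ∈ b ∧ (b \ P.sup id).card = i)).card)
    (x : Fin v) (hx : x ∈ P.sup id) :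
    3 * t x 3 + 2 * t x 2 + t x 1 ≤ v - 4 * ρ ∧
      t x 2 + 2 * t x 1 + 3 * t x 0 ≤ 4 * (ρ - 1) := by
  obtain ⟨p, hpP, hxp⟩ : ∃ p ∈ P, x ∈ p := by simpa using hx
  have hsplit := fun b (hb : b ∈ blocksThrough B P x) =>
    card_inter_sdiff_add_card_sdiff_of_mem_blocksThrough hpack hPPC hpP hxp hb
  have hcount := sum_comp_eq_sum_range_card_filter_smul (M := ℕ) (blocksThrough B P x)
    (fun b => (b \ P.sup id).card) (n := 4) fun b hb => by have := hsplit b hb; omega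
  have ht' : ∀ i, #((blocksThrough B P x).filter fun b => (b \ P.sup id).card = i) = t x i :=
    fun i => by rw [ht, blocksThrough, filter_filter]
  have houtside := sum_card_sdiff_blocksThrough_le hpack hPPC hx
  have hinside := sum_card_inter_sdiff_blocksThrough_le hpack hPPC hpP hxp
  rw [sum_congr rfl fun b hb => (by have := hsplit b hb; omega :
    (b ∩ (P.sup id \ p)).card = 3 - (b \ P.sup id).card)] at hinside
  rw [hcount (3 - ·)] at hinside
  replace houtside := (hcount id).symm.trans_le houtside
  simp only [id, sum_range_succ, sum_range_zero, ht', smul_eq_mul, hcard] at houtside hinside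
  omega

theorem stmt3 (v ρ : ℕ) (B : Finset (Finset (Fin v)))
    (hpack : IsPacking v 4 B)
    (P : Finset (Finset (Fin v)))
    (hPPC : IsPPC B P) (hcard : P.card = ρ)
    (hmax : ∀ Q, IsPPC B Q → Q.card ≤ ρ)
    (t : Fin v → ℕ → ℕ)
    (ht : ∀ p i, t p i =
      ((B \ P).filter (fun b => p ∈ b ∧ (b \ P.sup id).card = i)).card)
    (x : Fin v) (hx : x ∈ P.sup id) :
    3 * t x 3 + 2 * t x 2 + t x 1 ≤ v - 4 * ρ ∧
      t x 2 + 2 * t x 1 + 3 * t x 0 ≤ 4 * (ρ - 1) :=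
  stmt3_general v ρ B hpack P hPPC hcard t ht x hx
end

section
/- β(1,v,4) = D(v,4) for 4 ≤ v ≤ 13; β(1,v,4) = 13 for 14 ≤ v ≤ 39; and β(1,v,4) = ⌊(v−1)/3⌋ for v ≥ 40. -/
/-! A packing has no two disjoint blocks exactly when its maximum partial parallel class has
size `1`, so `β(1, v, 4)` is the largest size of an intersecting `(v, 4)`-packing. If all blocks of
such a packing pass through one point, there are at most `⌊(v - 1) / 3⌋` of them. Otherwise each
point `x` lies on at most `4` blocks, since the blocks through `x` meet a block missing `x` in
distinct points; as every block meets a fixed block `b₀`, there are at most `1 + 4 · 3 = 13`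
blocks. Both bounds are attained, by a sunflower and by the projective plane of order `3`. For
`v ≤ 13` the first and second moments of the replication numbers bound `D(v, 4)`, and explicit
intersecting packings attain these bounds. -/

open Finset

variable {v k : ℕ} {B : Finset (Finset (Fin v))}

def replication (B : Finset (Finset (Fin v))) (x : Fin v) : ℕ := #{b ∈ B | x ∈ b}

theorem sum_replication (B : Finset (Finset (Fin v))) :
    ∑ x, replication B x = ∑ b ∈ B, #b := by
  simp_rw [replication, card_filter]
  rw [sum_comm]
  simp_rw [← card_filter, filter_mem_eq_inter, univ_inter]

theorem sum_replication_sq (B : Finset (Finset (Fin v))) :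
    ∑ x, replication B x ^ 2 = ∑ b ∈ B, ∑ c ∈ B, #(b ∩ c) := by
  simp_rw [replication, sq, card_filter, sum_mul_sum]
  rw [sum_comm]
  refine sum_congr rfl fun b _ => sum_comm.trans (sum_congr rfl fun c _ => ?_)
  simp_rw [ite_zero_mul_ite_zero, mul_one, ← mem_inter, ← card_filter, filter_mem_eq_inter,
    univ_inter]

/-- Every other block meets `b₀`, so it passes through one of the points of `b₀`. -/
theorem card_le_one_add_sum_replication (hB : (B : Set (Finset (Fin v))).Intersecting)
    {b₀ : Finset (Fin v)} (hb₀ : b₀ ∈ B) :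
    #B ≤ 1 + ∑ x ∈ b₀, (replication B x - 1) := by
  have hcover : B ⊆ insert b₀ (b₀.biUnion fun x => {c ∈ B | x ∈ c}.erase b₀) := by
    intro c hc
    rcases eq_or_ne c b₀ with rfl | hcb₀
    · exact mem_insert_self _ _
    obtain ⟨x, hxc, hxb₀⟩ := not_disjoint_iff.1 (hB hc hb₀)
    exact mem_insert_of_mem (mem_biUnion.2 ⟨x, hxb₀, mem_erase.2 ⟨hcb₀, mem_filter.2 ⟨hc, hxc⟩⟩⟩)
  calc #B ≤ #(insert b₀ (b₀.biUnion fun x => {c ∈ B | x ∈ c}.erase b₀)) := card_le_card hcover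
    _ ≤ #(b₀.biUnion fun x => {c ∈ B | x ∈ c}.erase b₀) + 1 := card_insert_le _ _
    _ ≤ ∑ x ∈ b₀, #({c ∈ B | x ∈ c}.erase b₀) + 1 := by gcongr; exact card_biUnion_le
    _ = 1 + ∑ x ∈ b₀, (replication B x - 1) := by
      rw [add_comm]
      congr 1
      exact sum_congr rfl fun x hx => card_erase_of_mem (mem_filter.2 ⟨hb₀, hx⟩)

namespace IsPacking

theorem eq_of_mem_inter (h : IsPacking v k B) {b c : Finset (Fin v)} (hb : b ∈ B) (hc : c ∈ B)
    {x y : Fin v} (hx : x ∈ b ∩ c) (hy : y ∈ b ∩ c) (hxy : x ≠ y) : b = c := by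
  by_contra hbc
  have := h.2 b hb c hc hbc
  have := one_lt_card.2 ⟨x, hx, y, hy, hxy⟩
  omega

theorem sum_replication_eq (h : IsPacking v k B) : ∑ x, replication B x = k * #B := by
  rw [sum_replication, sum_congr rfl h.1, sum_const, smul_eq_mul, mul_comm]

theorem sum_replication_sq_add_card_le (h : IsPacking v k B) :
    ∑ x, replication B x ^ 2 + #B ≤ #B ^ 2 + k * #B := by
  have row : ∀ b ∈ B, ∑ c ∈ B, #(b ∩ c) + 1 ≤ #B + k := by
    intro b hb
    have hrest : ∑ c ∈ B.erase b, #(b ∩ c) ≤ #(B.erase b) * 1 :=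
      sum_le_card_nsmul _ _ _ fun c hc => h.2 b hb c (mem_of_mem_erase hc) (ne_of_mem_erase hc).symm
    rw [← add_sum_erase _ _ hb, inter_self, h.1 b hb]
    rw [card_erase_of_mem hb] at hrest
    have := card_pos.2 ⟨b, hb⟩
    omega
  calc ∑ x, replication B x ^ 2 + #B = ∑ b ∈ B, (∑ c ∈ B, #(b ∩ c) + 1) := by
        rw [sum_replication_sq, sum_add_distrib, card_eq_sum_ones]
    _ ≤ ∑ b ∈ B, (#B + k) := sum_le_sum row
    _ = #B ^ 2 + k * #B := by rw [sum_const, smul_eq_mul]; ring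

/-- The blocks through `x`, with `x` removed, are disjoint subsets of the other `v - 1` points. -/
theorem mul_replication_le (h : IsPacking v k B) (x : Fin v) :
    (k - 1) * replication B x ≤ v - 1 := by
  set S := {b ∈ B | x ∈ b}
  have hdisj : (S : Set (Finset (Fin v))).PairwiseDisjoint (·.erase x) := by
    intro b hb c hc hbc
    simp only [coe_filter, Set.mem_ofPred_eq, S] at hb hc
    refine disjoint_left.2 fun y hyb hyc => hbc ?_
    exact h.eq_of_mem_inter hb.1 hc.1 (mem_inter.2 ⟨hb.2, hc.2⟩)
      (mem_inter.2 ⟨mem_of_mem_erase hyb, mem_of_mem_erase hyc⟩) (ne_of_mem_erase hyb).symm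
  have hsub : S.biUnion (·.erase x) ⊆ univ.erase x :=
    fun y hy => by
      obtain ⟨b, -, hyb⟩ := mem_biUnion.1 hy
      exact mem_erase.2 ⟨ne_of_mem_erase hyb, mem_univ y⟩
  have hcard : ∀ b ∈ S, #(b.erase x) = k - 1 := fun b hb => by
    rw [card_erase_of_mem (mem_filter.1 hb).2, h.1 b (mem_filter.1 hb).1]
  calc (k - 1) * replication B x = ∑ b ∈ S, #(b.erase x) := by
        rw [sum_congr rfl hcard, sum_const, smul_eq_mul, mul_comm, replication]
    _ = #(S.biUnion (·.erase x)) := (card_biUnion hdisj).symm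
    _ ≤ #(univ.erase x) := card_le_card hsub
    _ = v - 1 := by rw [card_erase_of_mem (mem_univ x), card_univ, Fintype.card_fin]

theorem mul_card_le (h : IsPacking v k B) (hk : 2 ≤ k) : k * #B ≤ v * ((v - 1) / (k - 1)) := by
  rw [← h.sum_replication_eq]
  calc ∑ x, replication B x ≤ ∑ _x : Fin v, (v - 1) / (k - 1) :=
        sum_le_sum fun x _ => (Nat.le_div_iff_mul_le (by omega)).2 <| by
          rw [mul_comm]; exact h.mul_replication_le x
    _ = v * ((v - 1) / (k - 1)) := by simp

/-- Expands `∑ₓ (rₓ - r) (rₓ - r - 1) ≥ 0`, a product of consecutive integers being nonnegative. -/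
theorem second_moment_bound (h : IsPacking v k B) (r : ℕ) :
    (2 * r + 1) * (k * #B) + #B ≤ #B ^ 2 + k * #B + v * (r * (r + 1)) := by
  have hterm : ∀ d : ℤ, 0 ≤ d ^ 2 - (2 * r + 1) * d + r * (r + 1) := fun d => by
    rcases le_or_gt d r with hd | hd <;> nlinarith
  have hsum := sum_nonneg fun x (_ : x ∈ univ) => hterm (replication B x)
  simp only [sum_add_distrib, sum_sub_distrib, ← mul_sum, sum_const, card_univ,
    Fintype.card_fin, nsmul_eq_mul] at hsum
  have h1 := h.sum_replication_eq
  have h2 := h.sum_replication_sq_add_card_le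
  zify at h1 h2 ⊢
  nlinarith

theorem replication_le_card_of_notMem (h : IsPacking v k B)
    (hB : (B : Set (Finset (Fin v))).Intersecting) {b : Finset (Fin v)} (hb : b ∈ B) {x : Fin v}
    (hx : x ∉ b) : replication B x ≤ k := by
  set S := {c ∈ B | x ∈ c}
  have hdisj : (S : Set (Finset (Fin v))).PairwiseDisjoint (· ∩ b) := by
    intro c hc c' hc' hcc'
    simp only [coe_filter, Set.mem_ofPred_eq, S] at hc hc'
    refine disjoint_left.2 fun y hy hy' => hcc' ?_
    exact h.eq_of_mem_inter hc.1 hc'.1 (mem_inter.2 ⟨hc.2, hc'.2⟩)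
      (mem_inter.2 ⟨(mem_inter.1 hy).1, (mem_inter.1 hy').1⟩)
      (fun hxy => hx (hxy ▸ (mem_inter.1 hy).2))
  have hne : ∀ c ∈ S, (c ∩ b).Nonempty := fun c hc =>
    not_disjoint_iff_nonempty_inter.1 (hB (mem_filter.1 hc).1 hb)
  calc replication B x = #S := rfl
    _ ≤ #(S.biUnion (· ∩ b)) := card_le_card_biUnion hdisj hne
    _ ≤ #b := card_le_card (biUnion_subset.2 fun c _ => inter_subset_right)
    _ = k := h.1 b hb

/-- Either all blocks share a point, or every point lies on at most `k` blocks. -/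
theorem card_le_of_intersecting (h : IsPacking v k B)
    (hB : (B : Set (Finset (Fin v))).Intersecting) :
    #B ≤ k * (k - 1) + 1 ∨ (k - 1) * #B ≤ v - 1 := by
  by_cases hcommon : ∃ x, ∀ b ∈ B, x ∈ b
  · obtain ⟨x, hx⟩ := hcommon
    right
    have hrep : replication B x = #B := congrArg card (filter_true_of_mem hx)
    exact hrep ▸ h.mul_replication_le x
  · left
    push Not at hcommon
    obtain rfl | ⟨b₀, hb₀⟩ := B.eq_empty_or_nonempty
    · simp
    have hrep : ∀ x, replication B x ≤ k := fun x =>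
      let ⟨b, hb, hxb⟩ := hcommon x
      h.replication_le_card_of_notMem hB hb hxb
    calc #B ≤ 1 + ∑ x ∈ b₀, (replication B x - 1) := card_le_one_add_sum_replication hB hb₀
      _ ≤ 1 + ∑ x ∈ b₀, (k - 1) := by gcongr with x; exact hrep x
      _ = k * (k - 1) + 1 := by rw [sum_const, smul_eq_mul, h.1 b₀ hb₀, add_comm]

end IsPacking

theorem maxPPCSize_one_iff (hB : ∅ ∉ B) :
    MaxPPCSize B 1 ↔ B.Nonempty ∧ (B : Set (Finset (Fin v))).Intersecting := by
  constructor
  · rintro ⟨⟨P, hPB, hP⟩, hmax⟩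
    refine ⟨(card_pos.1 (hP ▸ one_pos)).mono hPB.1, fun b hb c hc hbc => ?_⟩
    rcases eq_or_ne b c with rfl | hne
    · rw [disjoint_self, bot_eq_empty] at hbc
      exact hB (hbc ▸ hb)
    have hpair : (({b, c} : Finset (Finset (Fin v))) : Set (Finset (Fin v))).Pairwise Disjoint := by
      rw [coe_pair]
      exact Set.pairwise_pair_of_symm.2 fun _ => hbc
    have hppc : IsPPC B {b, c} :=
      ⟨insert_subset hb (singleton_subset_iff.2 hc), fun _ hx _ hy => hpair hx hy⟩
    have := hmax _ hppc
    rw [card_pair hne] at this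
    omega
  · rintro ⟨⟨b, hb⟩, hint⟩
    refine ⟨⟨{b}, ⟨singleton_subset_iff.2 hb, by simp⟩, card_singleton b⟩, fun P hP => ?_⟩
    by_contra! hlt
    obtain ⟨c, hc, c', hc', hne⟩ := one_lt_card.1 hlt
    exact hint (hP.1 hc) (hP.1 hc') (hP.2 c hc c' hc' hne)

def intersectingPackingSizes (v k : ℕ) : Set ℕ :=
  {n | ∃ B : Finset (Finset (Fin v)), IsPacking v k B ∧ B.Nonempty ∧
    (B : Set (Finset (Fin v))).Intersecting ∧ #B = n}

theorem beta_one_eq_sSup (hk : 0 < k) : beta 1 v k = sSup (intersectingPackingSizes v k) := by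
  unfold beta intersectingPackingSizes
  congr 1
  ext n
  refine exists_congr fun B => and_congr_right fun hB => ?_
  rw [maxPPCSize_one_iff fun h0 => hk.ne (by simpa using hB.1 ∅ h0), and_assoc]

theorem beta_one_eq_packingNumber (hk : 0 < k) {N : ℕ} (hN : N ∈ intersectingPackingSizes v k)
    (hmax : ∀ B : Finset (Finset (Fin v)), IsPacking v k B → #B ≤ N) :
    beta 1 v k = packingNumber v k := by
  have hβ : IsGreatest (intersectingPackingSizes v k) N :=
    ⟨hN, fun _ ⟨B, hB, _, _, hn⟩ => hn ▸ hmax B hB⟩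
  have hD : IsGreatest {n | ∃ B : Finset (Finset (Fin v)), IsPacking v k B ∧ #B = n} N :=
    let ⟨B, hB, _, _, hn⟩ := hN
    ⟨⟨B, hB, hn⟩, fun _ ⟨B, hB, hn⟩ => hn ▸ hmax B hB⟩
  rw [beta_one_eq_sSup hk, hβ.csSup_eq]
  exact hD.csSup_eq.symm

theorem mem_intersectingPackingSizes_of_card_inter_eq_one {n : ℕ} (hn : 0 < n) (hk : 2 ≤ k)
    (f : Fin n → Finset (Fin v)) (hf : ∀ i, #(f i) = k)
    (hinter : ∀ i j, i ≠ j → #(f i ∩ f j) = 1) : n ∈ intersectingPackingSizes v k := by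
  have hf_inj : f.Injective := fun i j hij => by
    by_contra hne
    have := hinter i j hne
    rw [hij, inter_self, hf] at this
    omega
  have hpos : ∀ i j, 0 < #(f i ∩ f j) := fun i j => by
    rcases eq_or_ne i j with rfl | hne
    · rw [inter_self, hf]; omega
    · rw [hinter i j hne]; exact one_pos
  refine ⟨univ.image f, ⟨?_, ?_⟩, ?_, ?_, ?_⟩
  · simp only [mem_image, mem_univ, true_and, forall_exists_index, forall_apply_eq_imp_iff, hf,
      implies_true]
  · simp only [mem_image, mem_univ, true_and]
    rintro _ ⟨i, rfl⟩ _ ⟨j, rfl⟩ hij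
    exact (hinter i j fun h => hij (h ▸ rfl)).le
  · exact ⟨f ⟨0, hn⟩, mem_image_of_mem f (mem_univ _)⟩
  · simp only [coe_image, coe_univ, Set.image_univ]
    rintro _ ⟨i, rfl⟩ _ ⟨j, rfl⟩
    exact not_disjoint_iff_nonempty_inter.2 (card_pos.1 (hpos i j))
  · rw [card_image_of_injective _ hf_inj, card_univ, Fintype.card_fin]

def sunflower (v : ℕ) (i : Fin ((v - 1) / 3)) : Finset (Fin v) :=
  ({0, 3 * (i : ℕ) + 1, 3 * (i : ℕ) + 2, 3 * (i : ℕ) + 3} : Finset ℕ).attachFin fun m hm => by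
    have := i.isLt
    simp only [mem_insert, mem_singleton] at hm
    omega

theorem card_sunflower (i : Fin ((v - 1) / 3)) : #(sunflower v i) = 4 := by
  rw [sunflower, card_attachFin, card_insert_of_notMem (by simp), card_insert_of_notMem (by simp),
    card_pair (by omega)]

theorem card_sunflower_inter {i j : Fin ((v - 1) / 3)} (hij : i ≠ j) :
    #(sunflower v i ∩ sunflower v j) = 1 := by
  rw [card_eq_one]
  refine ⟨⟨0, by omega⟩, ext fun x => ?_⟩
  rw [← Fin.val_ne_iff] at hij
  simp only [sunflower, mem_inter, mem_attachFin, mem_insert, mem_singleton, Fin.ext_iff]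
  omega

theorem div_three_mem_intersectingPackingSizes (hv : 4 ≤ v) :
    (v - 1) / 3 ∈ intersectingPackingSizes v 4 :=
  mem_intersectingPackingSizes_of_card_inter_eq_one (by omega) (by norm_num) (sunflower v)
    card_sunflower fun _ _ => card_sunflower_inter

/-- The lines of the projective plane of order `3`: the translates of the perfect difference set
`{0, 1, 3, 9}` of `ℤ/13`. -/
def projectivePlaneLine (i : Fin 13) : Finset (Fin 13) :=
  ({0, 1, 3, 9} : Finset (Fin 13)).map (addLeftEmbedding i)

theorem card_projectivePlaneLine : ∀ i, #(projectivePlaneLine i) = 4 := by decide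

theorem card_projectivePlaneLine_inter :
    ∀ i j, i ≠ j → #(projectivePlaneLine i ∩ projectivePlaneLine j) = 1 := by decide

theorem thirteen_mem_intersectingPackingSizes (hv : 13 ≤ v) : 13 ∈ intersectingPackingSizes v 4 :=
  mem_intersectingPackingSizes_of_card_inter_eq_one (by norm_num) (by norm_num)
    (fun i => (projectivePlaneLine i).map (Fin.castLEEmb hv))
    (fun i => by rw [card_map, card_projectivePlaneLine])
    fun i j hij => by rw [← map_inter, card_map, card_projectivePlaneLine_inter i j hij]

def packing9 : Fin 3 → Finset (Fin 9) := ![{0, 1, 2, 3}, {3, 4, 5, 6}, {0, 4, 7, 8}]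

/-- The points are the edges of `K₅`, the blocks its vertex stars. -/
def packing10 : Fin 5 → Finset (Fin 10) :=
  ![{0, 1, 2, 3}, {0, 4, 5, 6}, {1, 4, 7, 8}, {2, 5, 7, 9}, {3, 6, 8, 9}]

/-- The rows and the columns of a `3 × 3` grid on `2, …, 10`, extended by `0` and `1`. -/
def packing11 : Fin 6 → Finset (Fin 11) :=
  ![{0, 2, 3, 4}, {0, 5, 6, 7}, {0, 8, 9, 10}, {1, 2, 5, 8}, {1, 3, 6, 9}, {1, 4, 7, 10}]

/-- The lines of the projective plane of order `3` that avoid one of its points. -/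
def packing12 : Fin 9 → Finset (Fin 12) :=
  ![{0, 3, 6, 9}, {1, 4, 7, 9}, {2, 5, 8, 9}, {0, 5, 7, 10}, {1, 3, 8, 10}, {2, 4, 6, 10},
    {0, 4, 8, 11}, {1, 5, 6, 11}, {2, 3, 7, 11}]

/-- The two moment bounds `4 b ≤ v r` and `second_moment_bound` (at `r - 1`), where
`r = ⌊(v - 1) / 3⌋`, already pin down `D(v, 4)` for `v ≤ 13`. -/
theorem exists_intersecting_maximum_packing (h4 : 4 ≤ v) (h13 : v ≤ 13) :
    ∃ N ∈ intersectingPackingSizes v 4,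
      ∀ B : Finset (Finset (Fin v)), IsPacking v 4 B → #B ≤ N := by
  suffices ∃ N ∈ intersectingPackingSizes v 4, ∀ b ≤ 13, 4 * b ≤ v * ((v - 1) / 3) →
      (2 * ((v - 1) / 3 - 1) + 1) * (4 * b) + b ≤
        b ^ 2 + 4 * b + v * (((v - 1) / 3 - 1) * ((v - 1) / 3 - 1 + 1)) → b ≤ N by
    obtain ⟨N, hN, hle⟩ := this
    refine ⟨N, hN, fun B hB => ?_⟩
    have h1 : 4 * #B ≤ v * ((v - 1) / 3) := hB.mul_card_le le_add_self
    have : v * ((v - 1) / 3) ≤ 13 * 4 := Nat.mul_le_mul h13 (by omega)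
    exact hle _ (by omega) h1 (hB.second_moment_bound _)
  rcases le_or_gt v 8 with h8 | h9
  · refine ⟨(v - 1) / 3, div_three_mem_intersectingPackingSizes h4, ?_⟩
    interval_cases v <;> decide
  interval_cases v
  · exact ⟨3, mem_intersectingPackingSizes_of_card_inter_eq_one (by norm_num) le_add_self
      packing9 (by decide) (by decide), by decide⟩
  · exact ⟨5, mem_intersectingPackingSizes_of_card_inter_eq_one (by norm_num) le_add_self
      packing10 (by decide) (by decide), by decide⟩
  · exact ⟨6, mem_intersectingPackingSizes_of_card_inter_eq_one (by norm_num) le_add_self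
      packing11 (by decide) (by decide), by decide⟩
  · exact ⟨9, mem_intersectingPackingSizes_of_card_inter_eq_one (by norm_num) le_add_self
      packing12 (by decide) (by decide), by decide⟩
  · exact ⟨13, thirteen_mem_intersectingPackingSizes le_rfl, by decide⟩

theorem beta_one_four_eq_max (hv : 13 ≤ v) : beta 1 v 4 = max 13 ((v - 1) / 3) := by
  rw [beta_one_eq_sSup (by norm_num)]
  refine IsGreatest.csSup_eq ⟨?_, ?_⟩
  · rcases max_cases 13 ((v - 1) / 3) with ⟨h, -⟩ | ⟨h, -⟩ <;> rw [h]
    exacts [thirteen_mem_intersectingPackingSizes hv,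
      div_three_mem_intersectingPackingSizes (by omega)]
  · rintro _ ⟨B, hB, -, hint, rfl⟩
    rcases hB.card_le_of_intersecting hint with h | h <;> omega

theorem stmt15 :
    (∀ v : ℕ, 4 ≤ v → v ≤ 13 → beta 1 v 4 = packingNumber v 4) ∧
    (∀ v : ℕ, 14 ≤ v → v ≤ 39 → beta 1 v 4 = 13) ∧
    (∀ v : ℕ, 40 ≤ v → beta 1 v 4 = (v - 1) / 3) := by
  refine ⟨fun v h4 h13 => ?_, fun v h14 h39 => ?_, fun v h40 => ?_⟩
  · obtain ⟨N, hN, hmax⟩ := exists_intersecting_maximum_packing h4 h13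
    exact beta_one_eq_packingNumber (by norm_num) hN hmax
  · rw [beta_one_four_eq_max (by omega)]
    omega
  · rw [beta_one_four_eq_max (by omega)]
    omega
end

section
/- β(3,13,4) = 7: there exists a (13,4)-packing with 7 blocks whose maximum partial parallel class has size 3, and no (13,4)-packing with 8 or more blocks has maximum partial parallel class of size 3. -/
/-!
For the lower bound, take the rows of a `3 × 4` grid together with its four columns, each column
extended by the thirteenth point: any four of these blocks would need `16 > 13` points.

For the upper bound, a partial parallel class of three blocks covers all points but one, `x`.
Any other block meets each of the three in at most one point, so it has a fourth point outside
them, namely `x`. The blocks through `x` are pairwise disjoint away from `x`, so there are at most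
`12 / 3 = 4` of them, and the packing has at most `3 + 4 = 7` blocks.
-/

open Finset

theorem card_biUnion_eq_card_mul {ι α : Type*} [DecidableEq α] {s : Finset ι} {t : ι → Finset α}
    {k : ℕ} (hs : (s : Set ι).PairwiseDisjoint t) (ht : ∀ i ∈ s, #(t i) = k) :
    #(s.biUnion t) = #s * k := by
  rw [card_biUnion hs, sum_const_nat ht]

section Packing

variable {v k : ℕ} {B P : Finset (Finset (Fin v))}

lemma IsPPC.pairwiseDisjoint (hP : IsPPC B P) : (P : Set (Finset (Fin v))).PairwiseDisjoint id :=
  fun _ hb₁ _ hb₂ hne => hP.2 _ hb₁ _ hb₂ hne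

lemma IsPPC.card_biUnion (hB : IsPacking v k B) (hP : IsPPC B P) : #(P.biUnion id) = #P * k :=
  card_biUnion_eq_card_mul hP.pairwiseDisjoint fun b hb => hB.1 b (hP.1 hb)

lemma IsPPC.card_mul_le (hB : IsPacking v k B) (hP : IsPPC B P) : #P * k ≤ v := by
  simpa [hP.card_biUnion hB] using card_le_univ (P.biUnion id)

lemma IsPacking.card_inter_biUnion_le (hB : IsPacking v k B) (hP : IsPPC B P) {b : Finset (Fin v)}
    (hb : b ∈ B) (hbP : b ∉ P) : #(b ∩ P.biUnion id) ≤ #P := by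
  rw [inter_biUnion]
  simpa using card_biUnion_le_card_mul P _ 1 fun p hp => by
    rw [inter_comm]
    exact hB.2 p (hP.1 hp) b hb (ne_of_mem_of_not_mem hp hbP)

lemma IsPacking.mem_of_compl_biUnion_eq_singleton (hB : IsPacking v k B) (hP : IsPPC B P)
    (hPk : #P < k) {x : Fin v} (hx : (P.biUnion id)ᶜ = {x}) {b : Finset (Fin v)} (hb : b ∈ B)
    (hbP : b ∉ P) : x ∈ b := by
  by_contra hxb
  have hbU : b ⊆ P.biUnion id := by
    rw [← compl_compl (P.biUnion id), hx]
    simpa using hxb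
  have := hB.card_inter_biUnion_le hP hb hbP
  rw [inter_eq_left.2 hbU, hB.1 b hb] at this
  omega

lemma IsPacking.card_mul_le_of_forall_mem (hB : IsPacking v k B) {C : Finset (Finset (Fin v))}
    (hC : C ⊆ B) {x : Fin v} (hx : ∀ b ∈ C, x ∈ b) : #C * (k - 1) ≤ v - 1 := by
  have hdisj : (C : Set (Finset (Fin v))).PairwiseDisjoint (·.erase x) := by
    intro b hb b' hb' hne
    rw [Function.onFun, disjoint_left]
    intro y hy hy'
    have : 1 < #(b ∩ b') := one_lt_card.2 ⟨x, mem_inter.2 ⟨hx b hb, hx b' hb'⟩,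
      y, mem_inter.2 ⟨mem_of_mem_erase hy, mem_of_mem_erase hy'⟩, (ne_of_mem_erase hy).symm⟩
    exact absurd (hB.2 b (hC hb) b' (hC hb') hne) (not_le.2 this)
  have hcard : ∀ b ∈ C, #(b.erase x) = k - 1 := fun b hb => by
    rw [card_erase_of_mem (hx b hb), hB.1 b (hC hb)]
  calc #C * (k - 1) = #(C.biUnion (·.erase x)) := (card_biUnion_eq_card_mul hdisj hcard).symm
    _ ≤ #(univ.erase x) := card_le_card fun y hy => by
        obtain ⟨b, -, hyb⟩ := mem_biUnion.1 hy
        exact mem_erase.2 ⟨ne_of_mem_erase hyb, mem_univ y⟩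
    _ = v - 1 := by simp

theorem IsPacking.card_sub_mul_le (hB : IsPacking v k B) (hP : IsPPC B P) (hPk : #P < k)
    (hv : #P * k + 1 = v) : (#B - #P) * (k - 1) ≤ v - 1 := by
  have hcompl : #(P.biUnion id)ᶜ = 1 := by
    rw [card_compl, hP.card_biUnion hB, Fintype.card_fin]
    omega
  obtain ⟨x, hx⟩ := card_eq_one.1 hcompl
  rw [← card_sdiff_of_subset hP.1]
  exact hB.card_mul_le_of_forall_mem sdiff_subset fun b hb =>
    hB.mem_of_compl_biUnion_eq_singleton hP hPk hx (mem_sdiff.1 hb).1 (mem_sdiff.1 hb).2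

end Packing

def gridPacking : Finset (Finset (Fin 13)) :=
  {{0, 1, 2, 3}, {4, 5, 6, 7}, {8, 9, 10, 11},
    {0, 4, 8, 12}, {1, 5, 9, 12}, {2, 6, 10, 12}, {3, 7, 11, 12}}

lemma isPacking_gridPacking : IsPacking 13 4 gridPacking := by
  refine ⟨fun b hb => ?_, fun b₁ h₁ b₂ h₂ => ?_⟩
  · fin_cases hb <;> rfl
  · fin_cases h₁ <;> fin_cases h₂ <;> decide

lemma maxPPCSize_gridPacking : MaxPPCSize gridPacking 3 := by
  refine ⟨⟨{{0, 1, 2, 3}, {4, 5, 6, 7}, {8, 9, 10, 11}}, ⟨by decide, ?_⟩, rfl⟩, fun P hP => ?_⟩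
  · intro b₁ h₁ b₂ h₂
    fin_cases h₁ <;> fin_cases h₂ <;> decide
  · have := hP.card_mul_le isPacking_gridPacking
    omega

theorem stmt16 :
    (∃ B : Finset (Finset (Fin 13)),
      IsPacking 13 4 B ∧ MaxPPCSize B 3 ∧ B.card = 7) ∧
    (∀ B : Finset (Finset (Fin 13)),
      IsPacking 13 4 B → MaxPPCSize B 3 → B.card ≤ 7) := by
  refine ⟨⟨gridPacking, isPacking_gridPacking, maxPPCSize_gridPacking, rfl⟩, ?_⟩
  rintro B hB ⟨⟨P, hP, hP3⟩, -⟩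
  have := hB.card_sub_mul_le hP (by omega) (by omega)
  omega
end
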